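/- arXiv:1607.04625 — 4 statements merged into one kernel-verified Lean document; each statement's English description precedes it below -/
import Mathlib

section
/- Let θ > 0, a ≥ 0 and b ≥ 0, and set s = √(2θ² + a). Then e^{−√2·θb} · erfc(s − θb/(√2 s)) + e^{√2·θb} · erfc(s + θb/(√2 s)) ≤ 3 · exp(−θ² − a/2 − θb). -/
open MeasureTheory Real

/-- The complementary error function `erfc(x) = (2/√π) ∫_x^∞ e^{-t²} dt`. -/
noncomputable def erfc (x : ℝ) : ℝ :=
  (2 / Real.sqrt Real.pi) * ∫ t in Set.Ioi x, Real.exp (-t ^ 2)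

lemma gauss_integrable : Integrable (fun t : ℝ => Real.exp (-t ^ 2)) := by
  simpa using integrable_exp_neg_mul_sq (one_pos)

lemma erfc_le_two (x : ℝ) : erfc x ≤ 2 := by
  have h1 : (∫ t in Set.Ioi x, Real.exp (-t ^ 2)) ≤ ∫ t : ℝ, Real.exp (-t ^ 2) :=
    setIntegral_le_integral gauss_integrable
      (Filter.Eventually.of_forall fun t => (Real.exp_pos _).le)
  have h2 : (∫ t : ℝ, Real.exp (-t ^ 2)) = Real.sqrt Real.pi := by
    simpa using integral_gaussian 1
  have hpi : 0 < Real.sqrt Real.pi := Real.sqrt_pos.2 Real.pi_pos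
  rw [erfc]
  calc (2 / Real.sqrt Real.pi) * ∫ t in Set.Ioi x, Real.exp (-t ^ 2)
      ≤ (2 / Real.sqrt Real.pi) * Real.sqrt Real.pi := by
        apply mul_le_mul_of_nonneg_left _ (by positivity)
        rw [← h2]; exact h1
    _ = 2 := by field_simp

lemma shift_integral (x : ℝ) :
    (∫ t in Set.Ioi x, Real.exp (-(t - x) ^ 2)) = ∫ u in Set.Ioi (0 : ℝ), Real.exp (-u ^ 2) := by
  have hemb : MeasurableEmbedding (fun u : ℝ => u + x) :=
    (Homeomorph.addRight x).isClosedEmbedding.measurableEmbedding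
  have hmap : Measure.map (fun u : ℝ => u + x) volume = volume :=
    map_add_right_eq_self volume x
  have := hemb.setIntegral_map (f := fun u : ℝ => u + x)
    (g := fun t : ℝ => Real.exp (-(t - x) ^ 2)) (s := Set.Ioi x) (μ := volume)
  rw [hmap] at this
  rw [this]
  have hpre : (fun u : ℝ => u + x) ⁻¹' Set.Ioi x = Set.Ioi 0 := by
    ext u; simp [Set.mem_preimage, lt_add_iff_pos_left]
  rw [hpre]
  congr 1 with u
  ring_nf

lemma erfc_le_exp {x : ℝ} (hx : 0 ≤ x) : erfc x ≤ Real.exp (-x ^ 2) := by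
  have hkey : (∫ t in Set.Ioi x, Real.exp (-t ^ 2)) ≤
      Real.exp (-x ^ 2) * ∫ t in Set.Ioi x, Real.exp (-(t - x) ^ 2) := by
    rw [← integral_const_mul]
    apply setIntegral_mono_on
    · exact gauss_integrable.integrableOn
    · apply Integrable.integrableOn
      have : Integrable (fun t : ℝ => Real.exp (-(t - x) ^ 2)) := by
        simpa using gauss_integrable.comp_sub_right x
      exact this.const_mul _
    · exact measurableSet_Ioi
    · intro t ht
      rw [← Real.exp_add]
      apply Real.exp_le_exp.2
      have : x ≤ t := le_of_lt ht
      nlinarith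
  have h0 : (∫ u in Set.Ioi (0 : ℝ), Real.exp (-u ^ 2)) = Real.sqrt Real.pi / 2 := by
    simpa using integral_gaussian_Ioi 1
  have hpi : 0 < Real.sqrt Real.pi := Real.sqrt_pos.2 Real.pi_pos
  rw [erfc]
  calc (2 / Real.sqrt Real.pi) * ∫ t in Set.Ioi x, Real.exp (-t ^ 2)
      ≤ (2 / Real.sqrt Real.pi) * (Real.exp (-x ^ 2) * (Real.sqrt Real.pi / 2)) := by
        apply mul_le_mul_of_nonneg_left _ (by positivity)
        rw [← h0, ← shift_integral]; exact hkey
    _ = Real.exp (-x ^ 2) := by field_simp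

theorem stmt1 (θ a b : ℝ) (hθ : 0 < θ) (ha : 0 ≤ a) (hb : 0 ≤ b) :
    Real.exp (-(Real.sqrt 2 * θ * b)) *
        erfc (Real.sqrt (2 * θ ^ 2 + a)
          - θ * b / (Real.sqrt 2 * Real.sqrt (2 * θ ^ 2 + a))) +
      Real.exp (Real.sqrt 2 * θ * b) *
        erfc (Real.sqrt (2 * θ ^ 2 + a)
          + θ * b / (Real.sqrt 2 * Real.sqrt (2 * θ ^ 2 + a))) ≤
    3 * Real.exp (-θ ^ 2 - a / 2 - θ * b) := by
  set s := Real.sqrt (2 * θ ^ 2 + a) with hs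
  have hspos : 0 < s := Real.sqrt_pos.2 (by positivity)
  have hs2 : s ^ 2 = 2 * θ ^ 2 + a := Real.sq_sqrt (by positivity)
  have hr2 : Real.sqrt 2 ^ 2 = 2 := Real.sq_sqrt (by norm_num)
  have hr2pos : (0:ℝ) < Real.sqrt 2 := Real.sqrt_pos.2 (by norm_num)
  set c := θ * b / (Real.sqrt 2 * s) with hc
  have hcnn : 0 ≤ c := by positivity
  have hcb : Real.sqrt 2 * s * c = θ * b := by
    rw [hc]; field_simp
  have hamgm : θ * b ≤ θ ^ 2 + a / 2 + c ^ 2 := by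
    nlinarith [sq_nonneg (s - Real.sqrt 2 * c)]
  -- second term bound
  have hterm2 : Real.exp (Real.sqrt 2 * θ * b) * erfc (s + c) ≤
      Real.exp (-θ ^ 2 - a / 2 - θ * b) := by
    have h1 : erfc (s + c) ≤ Real.exp (-(s + c) ^ 2) :=
      erfc_le_exp (by positivity)
    calc Real.exp (Real.sqrt 2 * θ * b) * erfc (s + c)
        ≤ Real.exp (Real.sqrt 2 * θ * b) * Real.exp (-(s + c) ^ 2) := by
          exact mul_le_mul_of_nonneg_left h1 (Real.exp_pos _).le
      _ = Real.exp (Real.sqrt 2 * θ * b - (s + c) ^ 2) := by rw [← Real.exp_add]; ring_nf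
      _ ≤ Real.exp (-θ ^ 2 - a / 2 - θ * b) := by
          apply Real.exp_le_exp.2
          nlinarith
  have hterm1 : Real.exp (-(Real.sqrt 2 * θ * b)) * erfc (s - c) ≤
      2 * Real.exp (-θ ^ 2 - a / 2 - θ * b) := by
    rcases le_or_gt c s with hcs | hcs
    · have h1 : erfc (s - c) ≤ Real.exp (-(s - c) ^ 2) :=
        erfc_le_exp (by linarith)
      calc Real.exp (-(Real.sqrt 2 * θ * b)) * erfc (s - c)
          ≤ Real.exp (-(Real.sqrt 2 * θ * b)) * Real.exp (-(s - c) ^ 2) := by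
            exact mul_le_mul_of_nonneg_left h1 (Real.exp_pos _).le
        _ = Real.exp (-(Real.sqrt 2 * θ * b) - (s - c) ^ 2) := by rw [← Real.exp_add]; ring_nf
        _ ≤ Real.exp (-θ ^ 2 - a / 2 - θ * b) := by
            apply Real.exp_le_exp.2
            nlinarith
        _ ≤ 2 * Real.exp (-θ ^ 2 - a / 2 - θ * b) := by
            nlinarith [Real.exp_pos (-θ ^ 2 - a / 2 - θ * b)]
    · have h1 : erfc (s - c) ≤ 2 := erfc_le_two _
      have hrlt : Real.sqrt 2 < 3 / 2 := by nlinarith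
      calc Real.exp (-(Real.sqrt 2 * θ * b)) * erfc (s - c)
          ≤ Real.exp (-(Real.sqrt 2 * θ * b)) * 2 := by
            exact mul_le_mul_of_nonneg_left h1 (Real.exp_pos _).le
        _ = 2 * Real.exp (-(Real.sqrt 2 * θ * b)) := by ring
        _ ≤ 2 * Real.exp (-θ ^ 2 - a / 2 - θ * b) := by
            apply mul_le_mul_of_nonneg_left _ (by norm_num)
            apply Real.exp_le_exp.2
            -- need √2 θ b ≥ θ² + a/2 + θb, i.e. 2sc ≥ s²/2 + √2 s c
            nlinarith [mul_pos hspos (sub_pos.2 hcs), sq_nonneg s]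
  calc _ ≤ 2 * Real.exp (-θ ^ 2 - a / 2 - θ * b) + Real.exp (-θ ^ 2 - a / 2 - θ * b) :=
        add_le_add hterm1 hterm2
    _ = 3 * Real.exp (-θ ^ 2 - a / 2 - θ * b) := by ring
end

section
/- There exists a universal constant C > 0 with the following property (Lemma 2, narrowband regime). Let R, R3 > 0, let α > 1 and α3 > 1, and set H = αR, H3 = α3 R3. Let Y ⊂ ℝ³ be a finite set separated by at least (H, H, H3), and let I : ℝ³ × ℝ³ → [0, ∞) be any function satisfying I(z, y) ≤ exp(−|z̃ − ỹ|²/(4R²) − (z3 − y3)²/(4R3²)) for all z ∈ ℝ³ and y ∈ Y. Then for every z ∈ ℝ³ and every point N(z) ∈ Y maximizing y ↦ I(z, y) over Y, one has Σ_{y ∈ Y \ {N(z)}} I(z, y) ≤ C · exp(−(min(α, α3)/4)²). -/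
open Finset

/-!
Rescale offsets from `z` so that the separation becomes `1` in some coordinate:
`y ↦ v y = ((y₁ - z₁)/H, (y₂ - z₂)/H, (y₃ - z₃)/H₃)`. The Gaussian bound then reads
`I z y ≤ exp (-(m²/4) ‖v y‖²)` with `m = min α α₃`. For `y ≠ N(z)` one of `v y`, `v N(z)` has
squared norm at least `1/4`, and `I z y ≤ I z N(z)` lets us use the larger of the two exponents;
this splits off the factor `exp (-(m/4)²)` and leaves `exp (-‖v y‖²/4)`. The integer parts of the
rescaled points of `Y` are pairwise distinct, so the remaining sum is dominated by a fixed
summable lattice sum over `ℤ³`.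
-/

open Real

noncomputable section

def sumSq (v : ℝ × ℝ × ℝ) : ℝ := v.1 ^ 2 + v.2.1 ^ 2 + v.2.2 ^ 2

def IsUnitSeparated {ι : Type*} (S : Finset ι) (v : ι → ℝ × ℝ × ℝ) : Prop :=
  ∀ i ∈ S, ∀ j ∈ S, i ≠ j →
    1 ≤ |(v i).1 - (v j).1| ∨ 1 ≤ |(v i).2.1 - (v j).2.1| ∨ 1 ≤ |(v i).2.2 - (v j).2.2|

lemma IsUnitSeparated.mono {ι : Type*} {S T : Finset ι} {v : ι → ℝ × ℝ × ℝ}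
    (h : IsUnitSeparated T v) (hST : S ⊆ T) : IsUnitSeparated S v :=
  fun i hi j hj hij => h i (hST hi) j (hST hj) hij

section Lattice

def expNegAbs (k : ℤ) : ℝ := exp (-|(k : ℝ)|)

def latticeWeight (k : ℤ × ℤ × ℤ) : ℝ := expNegAbs k.1 * (expNegAbs k.2.1 * expNegAbs k.2.2)

def floorTriple (v : ℝ × ℝ × ℝ) : ℤ × ℤ × ℤ := (⌊v.1⌋, ⌊v.2.1⌋, ⌊v.2.2⌋)

lemma summable_expNegAbs : Summable expNegAbs := by
  apply Summable.of_nat_of_neg <;>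
  · simpa [expNegAbs] using summable_exp_neg_nat

lemma latticeWeight_nonneg (k : ℤ × ℤ × ℤ) : 0 ≤ latticeWeight k := by
  unfold latticeWeight expNegAbs; positivity

lemma summable_latticeWeight : Summable latticeWeight := by
  have hnonneg : 0 ≤ expNegAbs := fun k => (exp_pos _).le
  exact summable_expNegAbs.mul_of_nonneg
    (summable_expNegAbs.mul_of_nonneg summable_expNegAbs hnonneg hnonneg)
    hnonneg (fun k => mul_nonneg (hnonneg _) (hnonneg _))

lemma tsum_latticeWeight_pos : 0 < ∑' k, latticeWeight k :=
  summable_latticeWeight.tsum_pos latticeWeight_nonneg 0 (by simp [latticeWeight, expNegAbs])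

lemma abs_floor_le_abs_add_one (t : ℝ) : |((⌊t⌋ : ℤ) : ℝ)| ≤ |t| + 1 :=
  abs_le.2 ⟨by linarith [Int.lt_floor_add_one t, neg_abs_le t],
    by linarith [Int.floor_le t, le_abs_self t]⟩

lemma exp_neg_sq_div_four_le (t : ℝ) : exp (-t ^ 2 / 4) ≤ exp 2 * expNegAbs ⌊t⌋ := by
  rw [expNegAbs, ← exp_add, exp_le_exp]
  -- `t²/4 ≥ |t| - 1` since `(|t| - 2)² ≥ 0`
  nlinarith [abs_floor_le_abs_add_one t, sq_nonneg (|t| - 2), sq_abs t]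

lemma exp_neg_sumSq_div_four_le (v : ℝ × ℝ × ℝ) :
    exp (-sumSq v / 4) ≤ exp 6 * latticeWeight (floorTriple v) := by
  calc exp (-sumSq v / 4)
      = exp (-v.1 ^ 2 / 4) * (exp (-v.2.1 ^ 2 / 4) * exp (-v.2.2 ^ 2 / 4)) := by
        rw [← exp_add, ← exp_add, sumSq]; ring_nf
    _ ≤ (exp 2 * expNegAbs ⌊v.1⌋) * ((exp 2 * expNegAbs ⌊v.2.1⌋) *
          (exp 2 * expNegAbs ⌊v.2.2⌋)) := by
        gcongr
        all_goals first
          | exact exp_neg_sq_div_four_le _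
          | exact mul_nonneg (exp_pos _).le (exp_pos _).le
    _ = exp 6 * latticeWeight (floorTriple v) := by
        have h6 : exp 6 = exp 2 * exp 2 * exp 2 := by rw [← exp_add, ← exp_add]; norm_num
        rw [h6, latticeWeight, floorTriple]; ring

lemma IsUnitSeparated.injOn_floorTriple {ι : Type*} {S : Finset ι} {v : ι → ℝ × ℝ × ℝ}
    (h : IsUnitSeparated S v) : Set.InjOn (floorTriple ∘ v) S := by
  intro i hi j hj hij
  by_contra hne
  simp only [Function.comp, floorTriple, Prod.mk.injEq] at hij
  obtain ⟨h1, h2, h3⟩ := hij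
  rcases h i hi j hj hne with h' | h' | h'
  · exact h'.not_gt (Int.abs_sub_lt_one_of_floor_eq_floor h1)
  · exact h'.not_gt (Int.abs_sub_lt_one_of_floor_eq_floor h2)
  · exact h'.not_gt (Int.abs_sub_lt_one_of_floor_eq_floor h3)

theorem IsUnitSeparated.sum_exp_neg_sumSq_le {ι : Type*} {S : Finset ι}
    {v : ι → ℝ × ℝ × ℝ} (h : IsUnitSeparated S v) :
    ∑ i ∈ S, exp (-sumSq (v i) / 4) ≤ exp 6 * ∑' k, latticeWeight k :=
  calc ∑ i ∈ S, exp (-sumSq (v i) / 4)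
      ≤ ∑ i ∈ S, exp 6 * latticeWeight (floorTriple (v i)) :=
        sum_le_sum fun i _ => exp_neg_sumSq_div_four_le (v i)
    _ = exp 6 * ∑ k ∈ S.image (floorTriple ∘ v), latticeWeight k := by
        rw [← mul_sum, sum_image h.injOn_floorTriple]; rfl
    _ ≤ exp 6 * ∑' k, latticeWeight k := by
        gcongr
        exact summable_latticeWeight.sum_le_tsum _ fun k _ => latticeWeight_nonneg k

end Lattice

section Rescaling

def scaledOffset (z : ℝ × ℝ × ℝ) (H H3 : ℝ) (y : ℝ × ℝ × ℝ) : ℝ × ℝ × ℝ :=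
  ((y.1 - z.1) / H, (y.2.1 - z.2.1) / H, (y.2.2 - z.2.2) / H3)

lemma one_le_abs_sub_div {H a b : ℝ} (hH : 0 < H) (h : H ≤ |a - b|) :
    1 ≤ |a / H - b / H| := by
  rwa [← sub_div, abs_div, abs_of_pos hH, one_le_div hH]

lemma isUnitSeparated_scaledOffset {Y : Finset (ℝ × ℝ × ℝ)} {H H3 : ℝ} (z : ℝ × ℝ × ℝ)
    (hH : 0 < H) (hH3 : 0 < H3)
    (hsep : ∀ y ∈ Y, ∀ y' ∈ Y, y ≠ y' →
      H ≤ |y.1 - y'.1| ∨ H ≤ |y.2.1 - y'.2.1| ∨ H3 ≤ |y.2.2 - y'.2.2|) :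
    IsUnitSeparated Y (scaledOffset z H H3) := by
  intro y hy y' hy' hne
  simp only [scaledOffset]
  rcases hsep y hy y' hy' hne with h | h | h
  · exact .inl (one_le_abs_sub_div hH (by rwa [sub_sub_sub_cancel_right]))
  · exact .inr (.inl (one_le_abs_sub_div hH (by rwa [sub_sub_sub_cancel_right])))
  · exact .inr (.inr (one_le_abs_sub_div hH3 (by rwa [sub_sub_sub_cancel_right])))

lemma gaussianExponent_eq (z y : ℝ × ℝ × ℝ) {R R3 α α3 : ℝ} (hR : R ≠ 0) (hR3 : R3 ≠ 0)
    (hα : α ≠ 0) (hα3 : α3 ≠ 0) :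
    -((z.1 - y.1) ^ 2 + (z.2.1 - y.2.1) ^ 2) / (4 * R ^ 2) - (z.2.2 - y.2.2) ^ 2 / (4 * R3 ^ 2)
      = -(α ^ 2 * ((scaledOffset z (α * R) (α3 * R3) y).1 ^ 2
          + (scaledOffset z (α * R) (α3 * R3) y).2.1 ^ 2)
        + α3 ^ 2 * (scaledOffset z (α * R) (α3 * R3) y).2.2 ^ 2) / 4 := by
  simp only [scaledOffset]
  field_simp
  ring

lemma gaussianExponent_le (z y : ℝ × ℝ × ℝ) {R R3 α α3 m : ℝ} (hR : R ≠ 0) (hR3 : R3 ≠ 0)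
    (hm : 0 < m) (hmα : m ≤ α) (hmα3 : m ≤ α3) :
    -((z.1 - y.1) ^ 2 + (z.2.1 - y.2.1) ^ 2) / (4 * R ^ 2) - (z.2.2 - y.2.2) ^ 2 / (4 * R3 ^ 2)
      ≤ -(m ^ 2 / 4) * sumSq (scaledOffset z (α * R) (α3 * R3) y) := by
  rw [gaussianExponent_eq z y (α := α) (α3 := α3) hR hR3 (by linarith) (by linarith), sumSq]
  set v := scaledOffset z (α * R) (α3 * R3) y
  have hα : m ^ 2 ≤ α ^ 2 := pow_le_pow_left₀ hm.le hmα 2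
  have hα3 : m ^ 2 ≤ α3 ^ 2 := pow_le_pow_left₀ hm.le hmα3 2
  nlinarith [sq_nonneg v.1, sq_nonneg v.2.1, sq_nonneg v.2.2]

end Rescaling

section Separation

lemma one_quarter_le_max_sq {a b : ℝ} (h : 1 ≤ |a - b|) : 1 / 4 ≤ max (a ^ 2) (b ^ 2) := by
  have htri : |a - b| ≤ |a| + |b| := abs_sub _ _
  rcases le_total |a| |b| with hab | hab
  · exact le_max_of_le_right (by nlinarith [sq_abs b])
  · exact le_max_of_le_left (by nlinarith [sq_abs a])

lemma one_quarter_le_max_sumSq {u w : ℝ × ℝ × ℝ}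
    (h : 1 ≤ |u.1 - w.1| ∨ 1 ≤ |u.2.1 - w.2.1| ∨ 1 ≤ |u.2.2 - w.2.2|) :
    1 / 4 ≤ max (sumSq u) (sumSq w) := by
  rcases h with h | h | h <;>
  · refine (one_quarter_le_max_sq h).trans (max_le_max ?_ ?_) <;>
    · simp only [sumSq]; nlinarith [sq_nonneg u.1, sq_nonneg u.2.1, sq_nonneg u.2.2,
        sq_nonneg w.1, sq_nonneg w.2.1, sq_nonneg w.2.2]

lemma exponent_split {m M s : ℝ} (hm : 1 ≤ m) (hM : 1 / 4 ≤ M) (hs : s ≤ M) :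
    -(m ^ 2 / 4) * M ≤ 1 / 16 + -(m / 4) ^ 2 + -s / 4 := by
  -- `(m²/4) M - m²/16 - M/4 + 1/16 = (m² - 1)(M - 1/4)/4`
  nlinarith [mul_nonneg (by nlinarith : (0 : ℝ) ≤ m ^ 2 - 1) (by linarith : (0 : ℝ) ≤ M - 1 / 4)]

end Separation

end

/-- Lemma 2, narrowband regime: the interaction coefficient of a well-separated source
set is bounded by `C · exp(-(min(α,α₃)/4)²)`. Points of `ℝ³` are written `(z₁, z₂, z₃)`
with cross-range part `(z₁, z₂)` and range coordinate `z₃`. -/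
theorem stmt2 :
    ∃ C : ℝ, 0 < C ∧
      ∀ (R R3 α α3 H H3 : ℝ) (Y : Finset (ℝ × ℝ × ℝ))
        (I : (ℝ × ℝ × ℝ) → (ℝ × ℝ × ℝ) → ℝ),
        0 < R → 0 < R3 → 1 < α → 1 < α3 → H = α * R → H3 = α3 * R3 →
        -- `Y` is separated by at least `(H, H, H3)`
        (∀ y ∈ Y, ∀ y' ∈ Y, y ≠ y' →
          H ≤ |y.1 - y'.1| ∨ H ≤ |y.2.1 - y'.2.1| ∨ H3 ≤ |y.2.2 - y'.2.2|) →
        -- `I` takes values in `[0, ∞)`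
        (∀ z y, 0 ≤ I z y) →
        -- Gaussian cross-correlation bound
        (∀ (z : ℝ × ℝ × ℝ), ∀ y ∈ Y,
          I z y ≤ Real.exp (-((z.1 - y.1) ^ 2 + (z.2.1 - y.2.1) ^ 2) / (4 * R ^ 2)
            - (z.2.2 - y.2.2) ^ 2 / (4 * R3 ^ 2))) →
        -- for every `z` and every maximizer `n = N(z)` of `I z ·` over `Y`
        ∀ (z n : ℝ × ℝ × ℝ), n ∈ Y → (∀ y ∈ Y, I z y ≤ I z n) →
          ∑ y ∈ Y.erase n, I z y ≤ C * Real.exp (-(min α α3 / 4) ^ 2) := by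
  refine ⟨exp (1 / 16) * (exp 6 * ∑' k, latticeWeight k),
    by have := tsum_latticeWeight_pos; positivity, ?_⟩
  intro R R3 α α3 H H3 Y I hR hR3 hα hα3 hH hH3 hsep _ hgauss z n hn hmax
  subst hH hH3
  set m := min α α3
  have hm : 1 ≤ m := le_min hα.le hα3.le
  set v := scaledOffset z (α * R) (α3 * R3)
  have hv : IsUnitSeparated Y v :=
    isUnitSeparated_scaledOffset z (by positivity) (by positivity) hsep
  have hI : ∀ y ∈ Y, I z y ≤ exp (-(m ^ 2 / 4) * sumSq (v y)) := fun y hy =>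
    (hgauss z y hy).trans <| exp_le_exp.2 <| gaussianExponent_le z y hR.ne' hR3.ne'
      (by linarith) (min_le_left _ _) (min_le_right _ _)
  have hterm : ∀ y ∈ Y.erase n,
      I z y ≤ exp (1 / 16) * exp (-(m / 4) ^ 2) * exp (-sumSq (v y) / 4) := by
    intro y hy
    have hy' := mem_of_mem_erase hy
    have hfar := one_quarter_le_max_sumSq (hv y hy' n hn (ne_of_mem_erase hy))
    have hImax : I z y ≤ exp (-(m ^ 2 / 4) * max (sumSq (v y)) (sumSq (v n))) := by
      rcases le_total (sumSq (v y)) (sumSq (v n)) with h | h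
      · rw [max_eq_right h]; exact (hmax y hy').trans (hI n hn)
      · rw [max_eq_left h]; exact hI y hy'
    rw [← exp_add, ← exp_add]
    exact hImax.trans (exp_le_exp.2 (exponent_split hm hfar (le_max_left _ _)))
  calc ∑ y ∈ Y.erase n, I z y
      ≤ ∑ y ∈ Y.erase n, exp (1 / 16) * exp (-(m / 4) ^ 2) * exp (-sumSq (v y) / 4) :=
        sum_le_sum hterm
    _ ≤ exp (1 / 16) * exp (-(m / 4) ^ 2) * (exp 6 * ∑' k, latticeWeight k) := by
        rw [← mul_sum]
        gcongr
        exact (hv.mono (erase_subset n Y)).sum_exp_neg_sumSq_le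
    _ = exp (1 / 16) * (exp 6 * ∑' k, latticeWeight k) * exp (-(m / 4) ^ 2) := by ring
end

section
/- For every θ > 0 and c0 > 0 there exists a constant C > 0, depending only on θ and c0, with the following property (Lemma 2, broadband regime). Let R, R3, L, D > 0 with θ D R ≤ 6 L R3, let α > 1 and α3 ≥ 8α/θ, and set H = αR, H3 = α3 R3. Let Y ⊂ ℝ³ be a finite set separated by at least (H, H, H3) whose points have cross-range parts of Euclidean norm at most D/√2, and let z ∈ ℝ³ have cross-range part of norm at most D/√2. Let I : ℝ³ × ℝ³ → [0, ∞) satisfy I(z, y) ≤ c0 · exp(−|z̃ − ỹ|²/(8R²) − (θ/R3)·|z3 − y3 + (|z̃|² − |ỹ|²)/(2L)|) for all y ∈ Y. Then for every point N(z) ∈ Y maximizing y ↦ I(z, y) over Y, one has Σ_{y ∈ Y \ {N(z)}} I(z, y) ≤ C · (exp(−α²/32) + exp(−α)) / α³. -/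
/-!
Write `E(y)` for the exponent in the cross-correlation bound, so `I(z, y) ≤ c0 e^{-E(y)}`.
For `y ≠ N(z) =: n` maximality gives `I(z, y) ≤ I(z, n)`, so `I(z, y) ≤ c0 e^{-max(E y, E n)}`,
and separation forces `E y + E n ≥ 8α - 256`. Either the cross-range parts of `y` and `n` are
`αR` apart, and then `z̃` is far from one of them, or their ranges are `α3 R3` apart; then their
range offsets `z3 - y3 + (|z̃|² - |ỹ|²)/(2L)` differ by at least `8αR3/θ` up to a curvature
correction of order `D |ỹ - ñ| / L` that the Gaussian cross-range factor pays for.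

To sum the terms, give each source the integer cell of its cross-range offset (scale `αR`) and
of its range offset (scale `2αR3/θ`). Separation makes the cells distinct, and `E(y)` grows
linearly with the `ℓ¹` norm of the cell, so the sum is dominated by `e^{-4α}` times a convergent
geometric series over `ℤ³`. Finally `e^{-4α} ≤ 6 e^{-α} / α³`.
-/

open Finset

lemma abs_floor_sub_one_le (x : ℝ) : |(⌊x⌋ : ℝ)| - 1 ≤ |x| := by
  have h₁ := Int.floor_le x
  have h₂ := Int.sub_one_lt_floor x
  rw [sub_le_iff_le_add, abs_le]
  constructor <;> linarith [neg_abs_le x, le_abs_self x]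

lemma mul_abs_floor_sub_two_le {α : ℝ} (hα : 1 ≤ α) (t : ℝ) :
    α * (|(⌊t⌋ : ℝ)| - 2) ≤ α ^ 2 * t ^ 2 := by
  have h := abs_floor_sub_one_le t
  have ht : |(⌊t⌋ : ℝ)| - 2 ≤ t ^ 2 := by
    nlinarith [sq_abs t, sq_nonneg (|t| - 1 / 2)]
  nlinarith [mul_le_mul_of_nonneg_right hα (sq_nonneg t)]

lemma abs_sub_lt_of_floor_div_eq {a b s : ℝ} (hs : 0 < s) (h : ⌊a / s⌋ = ⌊b / s⌋) :
    |a - b| < s := by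
  have := Int.abs_sub_lt_one_of_floor_eq_floor h
  rwa [← sub_div, abs_div, abs_of_pos hs, div_lt_one hs] at this

lemma abs_add_abs_le_of_sqrt_le {a b D : ℝ} (h : √(a ^ 2 + b ^ 2) ≤ D / √2) :
    |a| + |b| ≤ D := by
  have hl1 : |a| + |b| ≤ √2 * √(a ^ 2 + b ^ 2) := by
    rw [← Real.sqrt_mul zero_le_two]
    apply Real.le_sqrt_of_sq_le
    nlinarith [sq_abs a, sq_abs b, sq_nonneg (|a| - |b|)]
  calc |a| + |b| ≤ √2 * (D / √2) := hl1.trans (by gcongr)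
    _ = D := mul_div_cancel₀ D (by positivity)

lemma abs_sq_add_sq_sub_le {a b a' b' D : ℝ} (h : |a| + |b| ≤ D) (h' : |a'| + |b'| ≤ D) :
    |(a ^ 2 + b ^ 2) - (a' ^ 2 + b' ^ 2)| ≤ 2 * D * max |a - a'| |b - b'| := by
  set m := max |a - a'| |b - b'|
  have hu : |a - a'| ≤ m := le_max_left _ _
  have hv : |b - b'| ≤ m := le_max_right _ _
  calc |(a ^ 2 + b ^ 2) - (a' ^ 2 + b' ^ 2)|
      = |(a + a') * (a - a') + (b + b') * (b - b')| := by ring_nf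
    _ ≤ (|a| + |a'|) * |a - a'| + (|b| + |b'|) * |b - b'| := by
        refine (abs_add_le _ _).trans ?_
        rw [abs_mul, abs_mul]
        gcongr <;> exact abs_add_le _ _
    _ ≤ (|a| + |a'|) * m + (|b| + |b'|) * m := by gcongr
    _ ≤ 2 * D * m := by nlinarith [abs_nonneg (a - a')]

lemma sum_le_tsum_of_injOn {ι κ : Type*} {s : Finset ι} {f : ι → ℝ} {g : κ → ℝ} {e : ι → κ}
    (he : Set.InjOn e s) (hf : ∀ i ∈ s, f i ≤ g (e i)) (hg : ∀ k, 0 ≤ g k) (hs : Summable g) :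
    ∑ i ∈ s, f i ≤ ∑' k, g k := by
  classical
  calc ∑ i ∈ s, f i ≤ ∑ i ∈ s, g (e i) := sum_le_sum hf
    _ = ∑ k ∈ s.image e, g k := (sum_image he).symm
    _ ≤ ∑' k, g k := hs.sum_le_tsum _ fun k _ => hg k

lemma exp_neg_four_mul_le {α : ℝ} (hα : 0 < α) :
    Real.exp (-(4 * α)) ≤ 6 * Real.exp (-α) / α ^ 3 := by
  have hcube : α ^ 3 ≤ 6 * Real.exp α := by
    have := Real.pow_div_factorial_le_exp α hα.le 3
    norm_num [Nat.factorial] at this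
    linarith
  rw [le_div_iff₀ (by positivity)]
  calc Real.exp (-(4 * α)) * α ^ 3 ≤ Real.exp (-(4 * α)) * (6 * Real.exp α) := by gcongr
    _ = 6 * Real.exp (-(3 * α)) := by rw [mul_left_comm, ← Real.exp_add]; ring_nf
    _ ≤ 6 * Real.exp (-α) := by gcongr; linarith

noncomputable section

def rangeOffset (L : ℝ) (z y : ℝ × ℝ × ℝ) : ℝ :=
  z.2.2 - y.2.2 + ((z.1 ^ 2 + z.2.1 ^ 2) - (y.1 ^ 2 + y.2.1 ^ 2)) / (2 * L)

def decayRate (R R3 L θ : ℝ) (z y : ℝ × ℝ × ℝ) : ℝ :=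
  ((z.1 - y.1) ^ 2 + (z.2.1 - y.2.1) ^ 2) / (8 * R ^ 2) + θ / R3 * |rangeOffset L z y|

def crossDist (y y' : ℝ × ℝ × ℝ) : ℝ := max |y.1 - y'.1| |y.2.1 - y'.2.1|

def cell (L H s : ℝ) (z y : ℝ × ℝ × ℝ) : ℤ × ℤ × ℤ :=
  (⌊(y.1 - z.1) / H⌋, ⌊(y.2.1 - z.2.1) / H⌋, ⌊rangeOffset L z y / s⌋)

def cellNorm (j : ℤ × ℤ × ℤ) : ℝ := |(j.1 : ℝ)| + |(j.2.1 : ℝ)| + |(j.2.2 : ℝ)|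

def cellWeight (j : ℤ × ℤ × ℤ) : ℝ := Real.exp (-cellNorm j / 8)

end

lemma crossDist_sq_le (z y y' : ℝ × ℝ × ℝ) :
    crossDist y y' ^ 2 ≤ 2 * (((z.1 - y.1) ^ 2 + (z.2.1 - y.2.1) ^ 2) +
      ((z.1 - y'.1) ^ 2 + (z.2.1 - y'.2.1) ^ 2)) := by
  rcases max_choice |y.1 - y'.1| |y.2.1 - y'.2.1| with h | h <;>
    rw [crossDist, h, sq_abs] <;>
    nlinarith [add_sq_le (a := y.1 - z.1) (b := z.1 - y'.1),
      add_sq_le (a := y.2.1 - z.2.1) (b := z.2.1 - y'.2.1)]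

lemma summable_exp_neg_abs_div_eight : Summable fun n : ℤ => Real.exp (-|(n : ℝ)| / 8) := by
  have h : Summable fun n : ℕ => Real.exp (n * (-1 / 8)) :=
    Real.summable_exp_nat_mul_iff.mpr (by norm_num)
  refine .of_nat_of_neg (h.congr fun n => ?_) (h.congr fun n => ?_) <;>
    simp only [Int.cast_neg, Int.cast_natCast, abs_neg, Nat.abs_cast] <;> ring_nf

lemma summable_cellWeight : Summable cellWeight := by
  have h := summable_exp_neg_abs_div_eight
  have hnn : 0 ≤ fun n : ℤ => Real.exp (-|(n : ℝ)| / 8) := fun _ => (Real.exp_pos _).le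
  convert h.mul_of_nonneg (h.mul_of_nonneg h hnn hnn) hnn
    (fun _ => mul_nonneg (hnn _) (hnn _)) using 2 with j
  simp only [cellWeight, cellNorm, ← Real.exp_add]
  ring_nf

lemma le_of_pairwise_decay {a b Ey En c0 α K : ℝ} (hc0 : 0 ≤ c0) (hα : 1 ≤ α) (hab : a ≤ b)
    (ha : a ≤ c0 * Real.exp (-Ey)) (hb : b ≤ c0 * Real.exp (-En))
    (hpair : 8 * α - 256 ≤ Ey + En) (hK : α * (K - 5) / 8 ≤ Ey) :
    a ≤ c0 * Real.exp (133 - 4 * α) * Real.exp (-K / 8) := by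
  have hmax : 4 * α - 133 + K / 8 ≤ max Ey En := by
    rcases le_or_gt K 37 with hK37 | hK37
    · linarith [le_max_left Ey En, le_max_right Ey En]
    · nlinarith [le_max_left Ey En, mul_nonneg (sub_nonneg.2 hα) (sub_nonneg.2 hK37.le)]
  have ha' : a ≤ c0 * Real.exp (-max Ey En) := by
    rcases max_choice Ey En with h | h <;> rw [h]
    exacts [ha, hab.trans hb]
  calc a ≤ c0 * Real.exp (-max Ey En) := ha'
    _ ≤ c0 * Real.exp (-(4 * α - 133 + K / 8)) := by gcongr
    _ = c0 * Real.exp (133 - 4 * α) * Real.exp (-K / 8) := by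
        rw [mul_assoc, ← Real.exp_add]; ring_nf

section

variable {R R3 L θ D α H3 : ℝ} {z y y' : ℝ × ℝ × ℝ}

lemma sub_le_abs_rangeOffset_sub (hL : 0 < L) (hy : |y.1| + |y.2.1| ≤ D)
    (hy' : |y'.1| + |y'.2.1| ≤ D) :
    |y.2.2 - y'.2.2| - D * crossDist y y' / L ≤ |rangeOffset L z y - rangeOffset L z y'| := by
  set q := ((y.1 ^ 2 + y.2.1 ^ 2) - (y'.1 ^ 2 + y'.2.1 ^ 2)) / (2 * L)
  have hdiff : rangeOffset L z y - rangeOffset L z y' = -(y.2.2 - y'.2.2) - q := by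
    unfold rangeOffset; ring
  have hq : |q| ≤ D * crossDist y y' / L := by
    rw [abs_div, abs_of_pos (by linarith : (0 : ℝ) < 2 * L), div_le_div_iff₀ (by positivity) hL]
    have h : _ ≤ 2 * D * crossDist y y' := abs_sq_add_sq_sub_le hy hy'
    nlinarith [mul_le_mul_of_nonneg_right h hL.le]
  have := abs_sub_abs_le_abs_sub (-(y.2.2 - y'.2.2)) q
  rw [abs_neg] at this
  rw [hdiff]
  linarith

lemma rangeOffset_separated (hR : 0 < R) (hR3 : 0 < R3) (hL : 0 < L) (hθ : 0 < θ)
    (hDRL : θ * D * R ≤ 6 * L * R3) (hH3 : 8 * α * R3 ≤ θ * H3)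
    (hy : |y.1| + |y.2.1| ≤ D) (hy' : |y'.1| + |y'.2.1| ≤ D) (h3 : H3 ≤ |y.2.2 - y'.2.2|) :
    8 * α - 6 * (crossDist y y' / R) ≤
      θ / R3 * |rangeOffset L z y - rangeOffset L z y'| := by
  have key := (sub_le_abs_rangeOffset_sub (z := z) hL hy hy').trans' (sub_le_sub_right h3 _)
  have hm : 0 ≤ crossDist y y' := (abs_nonneg _).trans (le_max_left _ _)
  have hH3' : 8 * α ≤ θ / R3 * H3 := by rw [div_mul_eq_mul_div, le_div_iff₀ hR3]; linarith
  have hcorr : θ / R3 * (D * crossDist y y' / L) ≤ 6 * (crossDist y y' / R) := by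
    rw [show θ / R3 * (D * crossDist y y' / L) = θ * D * crossDist y y' / (R3 * L) by ring,
      ← mul_div_assoc, div_le_div_iff₀ (by positivity) hR]
    nlinarith [mul_le_mul_of_nonneg_right hDRL hm]
  calc 8 * α - 6 * (crossDist y y' / R) ≤ θ / R3 * (H3 - D * crossDist y y' / L) := by
        rw [mul_sub]; linarith
    _ ≤ θ / R3 * |rangeOffset L z y - rangeOffset L z y'| := by gcongr

lemma decayRate_add_decayRate_ge (hR : 0 < R) (hR3 : 0 < R3) (hL : 0 < L) (hθ : 0 < θ)
    (hDRL : θ * D * R ≤ 6 * L * R3) (hH3 : 8 * α * R3 ≤ θ * H3)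
    (hy : |y.1| + |y.2.1| ≤ D) (hy' : |y'.1| + |y'.2.1| ≤ D)
    (hsep : α * R ≤ crossDist y y' ∨ H3 ≤ |y.2.2 - y'.2.2|) :
    8 * α - 256 ≤ decayRate R R3 L θ z y + decayRate R R3 L θ z y' := by
  set p := crossDist y y' / R
  have hp : 0 ≤ p := div_nonneg ((abs_nonneg _).trans (le_max_left _ _)) hR.le
  have hcross : p ^ 2 / 16 ≤ ((z.1 - y.1) ^ 2 + (z.2.1 - y.2.1) ^ 2) / (8 * R ^ 2) +
      ((z.1 - y'.1) ^ 2 + (z.2.1 - y'.2.1) ^ 2) / (8 * R ^ 2) := by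
    rw [div_pow, ← add_div, div_div, div_le_div_iff₀ (by positivity) (by positivity)]
    nlinarith [crossDist_sq_le z y y', sq_nonneg R]
  have hθR3 : 0 ≤ θ / R3 := by positivity
  have hy₀ := mul_nonneg hθR3 (abs_nonneg (rangeOffset L z y))
  have hy'₀ := mul_nonneg hθR3 (abs_nonneg (rangeOffset L z y'))
  unfold decayRate
  rcases hsep with hsep | hsep
  · have : α ≤ p := by rwa [le_div_iff₀ hR]
    nlinarith [sq_nonneg (α - 64)]
  · have hrange : θ / R3 * |rangeOffset L z y - rangeOffset L z y'| ≤
        θ / R3 * |rangeOffset L z y| + θ / R3 * |rangeOffset L z y'| := by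
      rw [← mul_add]; gcongr; exact abs_sub _ _
    have := rangeOffset_separated (z := z) hR hR3 hL hθ hDRL hH3 hy hy' hsep
    nlinarith [sq_nonneg (p - 48)]

lemma cellNorm_cell_le_decayRate (hR : 0 < R) (hR3 : 0 < R3) (hθ : 0 < θ) (hα : 1 ≤ α) :
    α * (cellNorm (cell L (α * R) (2 * α * R3 / θ) z y) - 5) / 8 ≤
      decayRate R R3 L θ z y := by
  have hcross (a b : ℝ) :
      α * (|(⌊(b - a) / (α * R)⌋ : ℝ)| - 2) / 8 ≤ (a - b) ^ 2 / (8 * R ^ 2) := by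
    have hsq : (a - b) ^ 2 / (8 * R ^ 2) = α ^ 2 * ((b - a) / (α * R)) ^ 2 / 8 := by
      field_simp; ring
    rw [hsq]
    linarith [mul_abs_floor_sub_two_le hα ((b - a) / (α * R))]
  have hs : 0 < 2 * α * R3 / θ := by positivity
  have hrange : α * (|(⌊rangeOffset L z y / (2 * α * R3 / θ)⌋ : ℝ)| - 1) / 8 ≤
      θ / R3 * |rangeOffset L z y| := by
    have hfl := abs_floor_sub_one_le (rangeOffset L z y / (2 * α * R3 / θ))
    have heq : θ / R3 * |rangeOffset L z y| =
        2 * α * |rangeOffset L z y / (2 * α * R3 / θ)| := by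
      rw [abs_div, abs_of_pos hs]
      field_simp
    rw [heq]
    nlinarith [abs_nonneg (rangeOffset L z y / (2 * α * R3 / θ))]
  have h1 := hcross z.1 y.1
  have h2 := hcross z.2.1 y.2.1
  simp only [cellNorm, cell, decayRate]
  rw [add_div]
  linarith

lemma cell_injOn (hR : 0 < R) (hR3 : 0 < R3) (hL : 0 < L) (hθ : 0 < θ) (hα : 0 < α)
    (hDRL : θ * D * R ≤ 6 * L * R3) (hH3 : 8 * α * R3 ≤ θ * H3) {Y : Finset (ℝ × ℝ × ℝ)}
    (hYD : ∀ y ∈ Y, |y.1| + |y.2.1| ≤ D)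
    (hsep : ∀ y ∈ Y, ∀ y' ∈ Y, y ≠ y' → α * R ≤ crossDist y y' ∨ H3 ≤ |y.2.2 - y'.2.2|) :
    Set.InjOn (cell L (α * R) (2 * α * R3 / θ) z) Y := by
  intro y hy y' hy' hcell
  by_contra hne
  simp only [cell, Prod.mk.injEq] at hcell
  obtain ⟨h1, h2, h3⟩ := hcell
  have hd1 := abs_sub_lt_of_floor_div_eq (by positivity) h1
  have hd2 := abs_sub_lt_of_floor_div_eq (by positivity) h2
  have hd3 := abs_sub_lt_of_floor_div_eq (by positivity) h3
  rw [sub_sub_sub_cancel_right] at hd1 hd2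
  have hcross : crossDist y y' < α * R := max_lt hd1 hd2
  rcases hsep y hy y' hy' hne with hsep | hsep
  · exact hcross.not_ge hsep
  · have hfar := rangeOffset_separated (z := z) hR hR3 hL hθ hDRL hH3 (hYD y hy) (hYD y' hy') hsep
    have hnear : θ / R3 * |rangeOffset L z y - rangeOffset L z y'| < 2 * α :=
      calc θ / R3 * |rangeOffset L z y - rangeOffset L z y'| < θ / R3 * (2 * α * R3 / θ) := by
            gcongr
        _ = 2 * α := by field_simp
    have : crossDist y y' / R < α := by rwa [div_lt_iff₀ hR]
    linarith

lemma sum_erase_le_of_separated (hR : 0 < R) (hR3 : 0 < R3) (hL : 0 < L) (hθ : 0 < θ)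
    (hα : 1 ≤ α) (hDRL : θ * D * R ≤ 6 * L * R3) (hH3 : 8 * α * R3 ≤ θ * H3)
    {Y : Finset (ℝ × ℝ × ℝ)} (hYD : ∀ y ∈ Y, |y.1| + |y.2.1| ≤ D)
    (hsep : ∀ y ∈ Y, ∀ y' ∈ Y, y ≠ y' → α * R ≤ crossDist y y' ∨ H3 ≤ |y.2.2 - y'.2.2|)
    {c0 : ℝ} (hc0 : 0 ≤ c0) {I : ℝ × ℝ × ℝ → ℝ}
    (hI : ∀ y ∈ Y, I y ≤ c0 * Real.exp (-decayRate R R3 L θ z y))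
    {n : ℝ × ℝ × ℝ} (hn : n ∈ Y) (hmax : ∀ y ∈ Y, I y ≤ I n) :
    ∑ y ∈ Y.erase n, I y ≤
      c0 * Real.exp 133 * (∑' j, cellWeight j) * Real.exp (-(4 * α)) := by
  have hterm : ∀ y ∈ Y.erase n,
      I y ≤ c0 * Real.exp (133 - 4 * α) * cellWeight (cell L (α * R) (2 * α * R3 / θ) z y) := by
    intro y hy
    obtain ⟨hyn, hy⟩ := mem_erase.1 hy
    exact le_of_pairwise_decay hc0 hα (hmax y hy) (hI y hy) (hI n hn)
      (decayRate_add_decayRate_ge hR hR3 hL hθ hDRL hH3 (hYD y hy) (hYD n hn)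
        (hsep y hy n hn hyn))
      (cellNorm_cell_le_decayRate hR hR3 hθ hα)
  have hinj := (cell_injOn (z := z) hR hR3 hL hθ (by linarith) hDRL hH3 hYD hsep).mono
    (coe_subset.2 (erase_subset n Y))
  calc ∑ y ∈ Y.erase n, I y ≤ ∑' j, c0 * Real.exp (133 - 4 * α) * cellWeight j :=
        sum_le_tsum_of_injOn hinj hterm (fun j => by unfold cellWeight; positivity)
          (summable_cellWeight.mul_left _)
    _ = c0 * Real.exp 133 * (∑' j, cellWeight j) * Real.exp (-(4 * α)) := by
        rw [tsum_mul_left, sub_eq_add_neg, Real.exp_add]; ring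

end

/-- Lemma 2, broadband regime: the interaction coefficient of a well-separated source
set is bounded by `C · (exp(-α²/32) + exp(-α)) / α³`. Points of `ℝ³` are written
`(z₁, z₂, z₃)` with cross-range part `(z₁, z₂)` and range coordinate `z₃`. -/
theorem stmt3 (θ c0 : ℝ) (hθ : 0 < θ) (hc0 : 0 < c0) :
    ∃ C : ℝ, 0 < C ∧
      ∀ (R R3 L D α α3 H H3 : ℝ) (Y : Finset (ℝ × ℝ × ℝ))
        (I : (ℝ × ℝ × ℝ) → (ℝ × ℝ × ℝ) → ℝ),
        0 < R → 0 < R3 → 0 < L → 0 < D → θ * D * R ≤ 6 * L * R3 →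
        1 < α → 8 * α / θ ≤ α3 → H = α * R → H3 = α3 * R3 →
        -- `Y` is separated by at least `(H, H, H3)`
        (∀ y ∈ Y, ∀ y' ∈ Y, y ≠ y' →
          H ≤ |y.1 - y'.1| ∨ H ≤ |y.2.1 - y'.2.1| ∨ H3 ≤ |y.2.2 - y'.2.2|) →
        -- the points of `Y` have cross-range parts of norm at most `D/√2`
        (∀ y ∈ Y, Real.sqrt (y.1 ^ 2 + y.2.1 ^ 2) ≤ D / Real.sqrt 2) →
        -- `I` takes values in `[0, ∞)`
        (∀ z y, 0 ≤ I z y) →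
        ∀ (z : ℝ × ℝ × ℝ), Real.sqrt (z.1 ^ 2 + z.2.1 ^ 2) ≤ D / Real.sqrt 2 →
        -- broadband cross-correlation bound
        (∀ y ∈ Y,
          I z y ≤ c0 * Real.exp (-((z.1 - y.1) ^ 2 + (z.2.1 - y.2.1) ^ 2) / (8 * R ^ 2)
            - (θ / R3) * |z.2.2 - y.2.2 +
                ((z.1 ^ 2 + z.2.1 ^ 2) - (y.1 ^ 2 + y.2.1 ^ 2)) / (2 * L)|)) →
        -- for every maximizer `n = N(z)` of `I z ·` over `Y`
        ∀ n ∈ Y, (∀ y ∈ Y, I z y ≤ I z n) →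
          ∑ y ∈ Y.erase n, I z y ≤
            C * (Real.exp (-α ^ 2 / 32) + Real.exp (-α)) / α ^ 3 := by
  have hW := summable_cellWeight.tsum_pos (fun j => (Real.exp_pos _).le) 0 (Real.exp_pos _)
  refine ⟨6 * c0 * Real.exp 133 * ∑' j, cellWeight j, by positivity, ?_⟩
  intro R R3 L D α α3 H H3 Y I hR hR3 hL _ hDRL hα hα3 hH hH3 hsep hYD _ z _ hIb n hn hmax
  subst hH hH3
  have hα3' : 8 * α * R3 ≤ θ * (α3 * R3) := by
    rw [div_le_iff₀ hθ] at hα3; nlinarith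
  have hsep' : ∀ y ∈ Y, ∀ y' ∈ Y, y ≠ y' → α * R ≤ crossDist y y' ∨ α3 * R3 ≤ |y.2.2 - y'.2.2| :=
    fun y hy y' hy' hne => (or_assoc.2 (hsep y hy y' hy' hne)).imp_left
      (Or.elim · le_max_of_le_left le_max_of_le_right)
  have hdecay : ∀ y ∈ Y, I z y ≤ c0 * Real.exp (-decayRate R R3 L θ z y) := fun y hy =>
    (hIb y hy).trans_eq (by unfold decayRate rangeOffset; ring_nf)
  calc ∑ y ∈ Y.erase n, I z y
      ≤ c0 * Real.exp 133 * (∑' j, cellWeight j) * Real.exp (-(4 * α)) :=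
        sum_erase_le_of_separated hR hR3 hL hθ hα.le hDRL hα3'
          (fun y hy => abs_add_abs_le_of_sqrt_le (hYD y hy)) hsep' hc0.le hdecay hn hmax
    _ ≤ c0 * Real.exp 133 * (∑' j, cellWeight j) * (6 * Real.exp (-α) / α ^ 3) := by
        gcongr; exact exp_neg_four_mul_le (by linarith)
    _ ≤ c0 * Real.exp 133 * (∑' j, cellWeight j) *
          (6 * (Real.exp (-α ^ 2 / 32) + Real.exp (-α)) / α ^ 3) := by
        gcongr; linarith [Real.exp_pos (-α ^ 2 / 32)]
    _ = _ := by ring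
end

section
/- Let R, R3 > 0, θ > 0, α > 0, α3 ≥ 8α/θ, set H = αR and H3 = α3 R3, fix z = (z̃, z3) ∈ ℝ² × ℝ, and let c : ℝ² → ℝ be a measurable function satisfying θ|c(w̃)| ≤ 3α R3 whenever |w1 − z1| < H/2 and |w2 − z2| < H/2. Then ∫_{{(w̃, s) : |w1 − z1| < H/2, |w2 − z2| < H/2, |s − z3| ≥ H3/2}} exp(−|w̃ − z̃|²/(8R²) − (θ/R3)·|s − z3 + c(w̃)|) dw̃ ds ≤ (16 π R² R3/θ) · e^{−α}. -/
open MeasureTheory Real Set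

/-!
On the region, `θ |c| ≤ 3 α R3` lets us trade `|s - z₃ + c|` for `|s - z₃|` at the price of a
factor `e^{3α}`. The integrand is then dominated by a product of two Gaussians in `w₁, w₂` and
the tail `|s - z₃| ≥ H3 / 2` of a Laplace density in `s`. The Gaussians integrate to `√(8 π R²)`
each over the whole line, and the Laplace tail to `(2 R3 / θ) e^{-θ α3 / 2} ≤ (2 R3 / θ) e^{-4α}`.
-/

noncomputable def laplaceTail (k h : ℝ) : ℝ → ℝ :=
  {u : ℝ | h ≤ |u|}.indicator fun u => exp (-(k * |u|))

theorem laplaceTail_nonneg (k h u : ℝ) : 0 ≤ laplaceTail k h u :=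
  indicator_nonneg (fun _ _ => exp_nonneg _) u

theorem integral_laplaceTail {k h : ℝ} (hk : 0 < k) (hh : 0 < h) :
    ∫ u, laplaceTail k h u = 2 * exp (-(k * h)) / k := by
  have hcomp : laplaceTail k h = fun u => (Ici h).indicator (fun t => exp (-(k * t))) |u| := rfl
  have hIoi : Ioi (0 : ℝ) ∩ Ici h = Ici h := inter_eq_right.mpr fun x hx => hh.trans_le hx
  have hscale := integral_comp_mul_left_Ioi (fun x => exp (-x)) h hk
  simp only [smul_eq_mul, integral_exp_neg_Ioi] at hscale
  rw [hcomp, integral_comp_abs, setIntegral_indicator measurableSet_Ici, hIoi,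
    integral_Ici_eq_integral_Ioi, hscale]
  field_simp

theorem integrable_laplaceTail {k h : ℝ} (hk : 0 < k) (hh : 0 < h) :
    Integrable (laplaceTail k h) :=
  .of_integral_ne_zero <| by rw [integral_laplaceTail hk hh]; positivity

theorem exp_neg_mul_abs_add_le_laplaceTail {k h u : ℝ} (hk : 0 ≤ k) (hu : h ≤ |u|) (c : ℝ) :
    exp (-(k * |u + c|)) ≤ exp (k * |c|) * laplaceTail k h u := by
  rw [laplaceTail, indicator_of_mem (s := {u : ℝ | h ≤ |u|}) hu, ← exp_add, exp_le_exp]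
  have : |u| - |c| ≤ |u + c| := by simpa using abs_sub_abs_le_abs_sub u (-c)
  nlinarith

theorem exp_neg_sq_add_sq_div_sub_mul_abs_add_le {d k M h x y u c : ℝ} (hk : 0 ≤ k)
    (hc : k * |c| ≤ M) (hu : h ≤ |u|) :
    exp (-(x ^ 2 + y ^ 2) / d - k * |u + c|) ≤
      exp (-d⁻¹ * x ^ 2) * (exp (-d⁻¹ * y ^ 2) * (exp M * laplaceTail k h u)) := by
  calc exp (-(x ^ 2 + y ^ 2) / d - k * |u + c|)
      = exp (-d⁻¹ * x ^ 2) * (exp (-d⁻¹ * y ^ 2) * exp (-(k * |u + c|))) := by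
        simp only [← exp_add]; ring_nf
    _ ≤ _ := by
        gcongr
        exact (exp_neg_mul_abs_add_le_laplaceTail hk hu c).trans
          (mul_le_mul_of_nonneg_right (exp_le_exp.mpr hc) (laplaceTail_nonneg k h u))

theorem exp_three_mul_mul_exp_neg_le_exp_neg {θ R3 α α3 : ℝ} (hR3 : 0 < R3) (hθ : 0 < θ)
    (hα3 : 8 * α / θ ≤ α3) : exp (3 * α) * exp (-(θ / R3 * (α3 * R3 / 2))) ≤ exp (-α) := by
  rw [← exp_add, exp_le_exp, show θ / R3 * (α3 * R3 / 2) = α3 * θ / 2 by field_simp]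
  linarith [(div_le_iff₀ hθ).mp hα3]

section
variable {α β γ : Type*} [MeasurableSpace α] [MeasurableSpace β] [MeasurableSpace γ]
  {μ : Measure α} {ν : Measure β} {ρ : Measure γ} [SFinite μ] [SFinite ν] [SFinite ρ]

theorem setIntegral_le_integral_mul_integral_mul_integral {S : Set (α × β × γ)}
    (hS : MeasurableSet S) {f : α × β × γ → ℝ} {g₁ : α → ℝ} {g₂ : β → ℝ} {g₃ : γ → ℝ}
    (hg₁ : Integrable g₁ μ) (hg₂ : Integrable g₂ ν) (hg₃ : Integrable g₃ ρ)
    (hg₁0 : 0 ≤ g₁) (hg₂0 : 0 ≤ g₂) (hg₃0 : 0 ≤ g₃) (hf0 : ∀ p ∈ S, 0 ≤ f p)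
    (hfg : ∀ p ∈ S, f p ≤ g₁ p.1 * (g₂ p.2.1 * g₃ p.2.2)) :
    ∫ p in S, f p ∂μ.prod (ν.prod ρ) ≤
      (∫ x, g₁ x ∂μ) * ((∫ y, g₂ y ∂ν) * ∫ s, g₃ s ∂ρ) := by
  have hG : Integrable (fun p : α × β × γ => g₁ p.1 * (g₂ p.2.1 * g₃ p.2.2))
      (μ.prod (ν.prod ρ)) :=
    hg₁.mul_prod (hg₂.mul_prod hg₃)
  calc ∫ p in S, f p ∂μ.prod (ν.prod ρ)
      ≤ ∫ p in S, g₁ p.1 * (g₂ p.2.1 * g₃ p.2.2) ∂μ.prod (ν.prod ρ) :=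
        integral_mono_of_nonneg (ae_restrict_of_forall_mem hS hf0) hG.integrableOn
          (ae_restrict_of_forall_mem hS hfg)
    _ ≤ ∫ p, g₁ p.1 * (g₂ p.2.1 * g₃ p.2.2) ∂μ.prod (ν.prod ρ) :=
        setIntegral_le_integral hG
          (ae_of_all _ fun p => mul_nonneg (hg₁0 _) (mul_nonneg (hg₂0 _) (hg₃0 _)))
    _ = _ := by
        rw [integral_prod_mul g₁ (fun q : β × γ => g₂ q.1 * g₃ q.2), integral_prod_mul]

end

theorem stmt13_general (R R3 θ α α3 H H3 : ℝ) (hR : 0 < R) (hR3 : 0 < R3) (hθ : 0 < θ)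
    (hα : 0 < α) (hα3 : 8 * α / θ ≤ α3) (hH3 : H3 = α3 * R3)
    (z : ℝ × ℝ × ℝ) (c : ℝ × ℝ → ℝ)
    (hcb : ∀ w : ℝ × ℝ, |w.1 - z.1| < H / 2 → |w.2 - z.2.1| < H / 2 →
      θ * |c w| ≤ 3 * α * R3) :
    (∫ w in {w : ℝ × ℝ × ℝ |
        |w.1 - z.1| < H / 2 ∧ |w.2.1 - z.2.1| < H / 2 ∧ H3 / 2 ≤ |w.2.2 - z.2.2|},
        Real.exp (-((w.1 - z.1) ^ 2 + (w.2.1 - z.2.1) ^ 2) / (8 * R ^ 2)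
          - (θ / R3) * |w.2.2 - z.2.2 + c (w.1, w.2.1)|)) ≤
      16 * Real.pi * R ^ 2 * R3 / θ * Real.exp (-α) := by
  set S := {w : ℝ × ℝ × ℝ |
    |w.1 - z.1| < H / 2 ∧ |w.2.1 - z.2.1| < H / 2 ∧ H3 / 2 ≤ |w.2.2 - z.2.2|}
  set G : ℝ → ℝ := fun t => exp (-(8 * R ^ 2)⁻¹ * t ^ 2)
  have hk : 0 < θ / R3 := by positivity
  have hα3pos : 0 < α3 := (by positivity : 0 < 8 * α / θ).trans_le hα3
  have hH3pos : 0 < H3 / 2 := by rw [hH3]; positivity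
  have hG : Integrable G := integrable_exp_neg_mul_sq (by positivity)
  have hgauss (a : ℝ) : ∫ x, G (x - a) = √(π / (8 * R ^ 2)⁻¹) := by
    rw [integral_sub_right_eq_self G a, integral_gaussian]
  have hS : MeasurableSet S := by measurability
  have hbound : ∀ w ∈ S, exp (-((w.1 - z.1) ^ 2 + (w.2.1 - z.2.1) ^ 2) / (8 * R ^ 2)
      - θ / R3 * |w.2.2 - z.2.2 + c (w.1, w.2.1)|) ≤ G (w.1 - z.1) *
        (G (w.2.1 - z.2.1) * (exp (3 * α) * laplaceTail (θ / R3) (H3 / 2) (w.2.2 - z.2.2))) := by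
    rintro w ⟨h1, h2, h3⟩
    refine exp_neg_sq_add_sq_div_sub_mul_abs_add_le hk.le ?_ h3
    rw [div_mul_eq_mul_div, div_le_iff₀ hR3]
    exact hcb _ h1 h2
  calc _ ≤ (∫ x, G (x - z.1)) * ((∫ y, G (y - z.2.1)) *
        ∫ s, exp (3 * α) * laplaceTail (θ / R3) (H3 / 2) (s - z.2.2)) :=
        setIntegral_le_integral_mul_integral_mul_integral hS (hG.comp_sub_right _)
          (hG.comp_sub_right _) (((integrable_laplaceTail hk hH3pos).comp_sub_right _).const_mul _)
          (fun _ => exp_nonneg _) (fun _ => exp_nonneg _)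
          (fun _ => mul_nonneg (exp_nonneg _) (laplaceTail_nonneg _ _ _))
          (fun _ _ => exp_nonneg _) hbound
    _ = 8 * π * R ^ 2 * (2 * R3 / θ) * (exp (3 * α) * exp (-(θ / R3 * (α3 * R3 / 2)))) := by
        rw [hgauss, hgauss, integral_const_mul, integral_sub_right_eq_self (laplaceTail _ _),
          integral_laplaceTail hk hH3pos, ← mul_assoc (√_), mul_self_sqrt (by positivity), hH3]
        field_simp
    _ ≤ 8 * π * R ^ 2 * (2 * R3 / θ) * exp (-α) := by
        gcongr
        exact exp_three_mul_mul_exp_neg_le_exp_neg hR3 hθ hα3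
    _ = _ := by ring

/-- The tail estimate over the region `S_{z,3}` in the proof of Lemma 2, broadband
regime. Points `(w̃, s)` of `ℝ² × ℝ` are written `(w₁, w₂, s)`. -/
theorem stmt13 (R R3 θ α α3 H H3 : ℝ) (hR : 0 < R) (hR3 : 0 < R3) (hθ : 0 < θ)
    (hα : 0 < α) (hα3 : 8 * α / θ ≤ α3) (hH : H = α * R) (hH3 : H3 = α3 * R3)
    (z : ℝ × ℝ × ℝ) (c : ℝ × ℝ → ℝ) (hc : Measurable c)
    (hcb : ∀ w : ℝ × ℝ, |w.1 - z.1| < H / 2 → |w.2 - z.2.1| < H / 2 →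
      θ * |c w| ≤ 3 * α * R3) :
    (∫ w in {w : ℝ × ℝ × ℝ |
        |w.1 - z.1| < H / 2 ∧ |w.2.1 - z.2.1| < H / 2 ∧ H3 / 2 ≤ |w.2.2 - z.2.2|},
        Real.exp (-((w.1 - z.1) ^ 2 + (w.2.1 - z.2.1) ^ 2) / (8 * R ^ 2)
          - (θ / R3) * |w.2.2 - z.2.2 + c (w.1, w.2.1)|)) ≤
      16 * Real.pi * R ^ 2 * R3 / θ * Real.exp (-α) :=
  stmt13_general R R3 θ α α3 H H3 hR hR3 hθ hα hα3 hH3 z c hcb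
end
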